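/- arXiv:2502.04616 — 3 statements merged into one kernel-verified Lean document; each statement's English description precedes it below -/
import Mathlib

section
/- Let δ ∈ (0, 4.864) and r_max := 4.864 − δ, and assume the step ratios satisfy 0 < r_k < r_max for 2 ≤ k ≤ N+1. Define the discrete modified energy 𝓔_h[φ^n, R^n] := (ε²/2)‖∇_hφ^n‖² + R^n + (r_{n+1}√r_max/(2(1+r_{n+1})))·‖φ^n − φ^{n−1}‖²/τ_n for n ≥ 1, and 𝓔_h[φ^0, R^0] := (ε²/2)‖∇_hφ^0‖² + R^0. Then for any κ ≥ 0 and any functions f, F, V : ℝ → ℝ, the solution of the BDF2-sESAV-I scheme satisfies 𝓔_h[φ^n, R^n] ≤ 𝓔_h[φ^{n−1}, R^{n−1}] for all 1 ≤ n ≤ N. -/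
/-- Discrete Laplace operator on periodic grid functions. -/
noncomputable def lapH (M : ℕ) (h : ℝ) (v : ZMod M × ZMod M → ℝ) :
    ZMod M × ZMod M → ℝ :=
  fun p => (v (p.1 + 1, p.2) + v (p.1 - 1, p.2) + v (p.1, p.2 + 1) + v (p.1, p.2 - 1)
    - 4 * v p) / h ^ 2

/-- Discrete inner product on periodic grid functions. -/
noncomputable def ipH (M : ℕ) [NeZero M] (h : ℝ)
    (v w : ZMod M × ZMod M → ℝ) : ℝ :=
  h ^ 2 * ∑ p : ZMod M × ZMod M, v p * w p

/-- Discrete maximum norm of a periodic grid function. -/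
noncomputable def maxNorm (M : ℕ) [NeZero M] (v : ZMod M × ZMod M → ℝ) : ℝ :=
  Finset.univ.sup' ⟨(0, 0), Finset.mem_univ _⟩ fun p => |v p|

/-- E_{1h}[v] = h² Σ F(v(i,j)). -/
noncomputable def E1h (M : ℕ) [NeZero M] (h : ℝ) (F : ℝ → ℝ)
    (v : ZMod M × ZMod M → ℝ) : ℝ :=
  h ^ 2 * ∑ p : ZMod M × ZMod M, F (v p)

/-- g_h(v, w) = exp(w)/exp(E_{1h}[v]). -/
noncomputable def gh (M : ℕ) [NeZero M] (h : ℝ) (F : ℝ → ℝ)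
    (v : ZMod M × ZMod M → ℝ) (w : ℝ) : ℝ :=
  Real.exp w / Real.exp (E1h M h F v)

/-- Adjacent step ratio: r_k = τ_k/τ_{k−1} for k ≥ 2, and r_1 = 0. -/
noncomputable def ratio (τ : ℕ → ℝ) (k : ℕ) : ℝ :=
  if 2 ≤ k then τ k / τ (k - 1) else 0

/-- Variable-step BDF2 convolution kernels b_j^{(n)}. -/
noncomputable def bker (τ : ℕ → ℝ) (n j : ℕ) : ℝ :=
  if n = 1 then (if j = 0 then 1 / τ 1 else 0)
  else if j = 0 then (1 + 2 * ratio τ n) / (τ n * (1 + ratio τ n))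
  else if j = 1 then -(ratio τ n) ^ 2 / (τ n * (1 + ratio τ n))
  else 0

/-- Variable-step BDF2 operator D₂w^n = Σ_{k=1}^n b_{n−k}^{(n)}(w^k − w^{k−1}). -/
noncomputable def D2 (τ : ℕ → ℝ) (w : ℕ → ℝ) (n : ℕ) : ℝ :=
  ∑ k ∈ Finset.Icc 1 n, bker τ n (n - k) * (w k - w (k - 1))

/-- Recombined kernels d_k^{(n)}: d_0^{(n)} = b_0^{(n)},
d_k^{(n)} = η^{k−1}(b_0^{(n)}η + b_1^{(n)}) for k ≥ 1 (so d_1^{(1)} = η b_0^{(1)}). -/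
noncomputable def dker (τ : ℕ → ℝ) (η : ℝ) (n k : ℕ) : ℝ :=
  if k = 0 then bker τ n 0
  else η ^ (k - 1) * (bker τ n 0 * η + bker τ n 1)

/-- The BDF2-sESAV-I scheme: predictor equation (i), BDF2 equation (ii) and
auxiliary-variable equation (iii), for 1 ≤ n ≤ N, with R^0 = E_{1h}[φ^0]. -/
structure BDF2sESAVI (M : ℕ) [NeZero M] (h ε κ : ℝ) (f F V : ℝ → ℝ)
    (N : ℕ) (τ : ℕ → ℝ) (φ φhat : ℕ → ZMod M × ZMod M → ℝ) (R : ℕ → ℝ) : Prop where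
  init : R 0 = E1h M h F (φ 0)
  pred : ∀ n, 1 ≤ n → n ≤ N → ∀ p,
    (φhat n p - φ (n - 1) p) / τ n =
      ε ^ 2 * lapH M h (φhat n) p + f (φ (n - 1) p)
        - κ * (φhat n p - φ (n - 1) p)
  step : ∀ n, 1 ≤ n → n ≤ N → ∀ p,
    D2 τ (fun k => φ k p) n =
      ε ^ 2 * lapH M h (φ n) p
        + V (gh M h F (φhat n) (R (n - 1))) * f (φhat n p)
        - κ * (φ n p - V (gh M h F (φhat n) (R (n - 1))) * φhat n p)
  aux : ∀ n, 1 ≤ n → n ≤ N →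
    (R n - R (n - 1)) / τ n =
      - ipH M h
          (fun p => V (gh M h F (φhat n) (R (n - 1))) * f (φhat n p)
            - κ * (φ n p - V (gh M h F (φhat n) (R (n - 1))) * φhat n p))
          (fun p => (φ n p - φ (n - 1) p) / τ n)

/-- Squared discrete L² norm of the discrete gradient ∇_h v (both components summed). -/
noncomputable def gradNormSq (M : ℕ) [NeZero M] (h : ℝ)
    (v : ZMod M × ZMod M → ℝ) : ℝ :=
  h ^ 2 * ∑ p : ZMod M × ZMod M,
    (((v (p.1 + 1, p.2) - v p) / h) ^ 2 + ((v (p.1, p.2 + 1) - v p) / h) ^ 2)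

/-- Squared discrete L² norm of a periodic grid function. -/
noncomputable def normSq (M : ℕ) [NeZero M] (h : ℝ)
    (v : ZMod M × ZMod M → ℝ) : ℝ :=
  h ^ 2 * ∑ p : ZMod M × ZMod M, (v p) ^ 2

/-- The discrete modified energy 𝓔_h[φ^n, R^n]. -/
noncomputable def modEnergy (M : ℕ) [NeZero M] (h ε rmax : ℝ) (τ : ℕ → ℝ)
    (φ : ℕ → ZMod M × ZMod M → ℝ) (R : ℕ → ℝ) (n : ℕ) : ℝ :=
  ε ^ 2 / 2 * gradNormSq M h (φ n) + R n +
    if n = 0 then 0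
    else ratio τ (n + 1) * Real.sqrt rmax / (2 * (1 + ratio τ (n + 1)))
      * normSq M h (fun p => φ n p - φ (n - 1) p) / τ n

/-!
Testing the BDF2 equation (ii) against `φⁿ - φⁿ⁻¹` and inserting it into the auxiliary equation
(iii) removes the nonlinear term altogether:
`Rⁿ - Rⁿ⁻¹ = -⟨D₂φⁿ, φⁿ - φⁿ⁻¹⟩ - ε² ⟨∇φⁿ, ∇(φⁿ - φⁿ⁻¹)⟩`.
Summation by parts and polarization turn the last term into the change of the gradient energy plus
a nonnegative remainder. With `uₖ = φᵏ - φᵏ⁻¹`, `r = rₙ`, `r' = rₙ₊₁` and `s = √r_max`,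
`⟨D₂φⁿ, uₙ⟩ = b₀⁽ⁿ⁾‖uₙ‖² + b₁⁽ⁿ⁾⟨uₙ₋₁, uₙ⟩`, and Young's inequality
`2s⟨uₙ₋₁, uₙ⟩ ≤ ‖uₙ‖² + s²‖uₙ₋₁‖²` reduces the dissipation to the scalar inequality
`r's / (2(1 + r')) ≤ (1 + 2r)/(1 + r) - r² / (2s(1 + r))` for `0 ≤ r, r' ≤ s²`,
which holds as soon as `s³ ≤ 1 + 2s²`. The case `n = 1` is included via `r₁ = 0`.
-/

open Finset

lemma Equiv.Perm.sum_second_difference_mul {ι : Type*} [Fintype ι] (e : Equiv.Perm ι)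
    (v w : ι → ℝ) :
    ∑ p, (v (e p) + v (e.symm p) - 2 * v p) * w p
      = -∑ p, (v (e p) - v p) * (w (e p) - w p) := by
  have hdiag : ∑ p, v (e p) * w (e p) = ∑ p, v p * w p :=
    Equiv.sum_comp e fun p => v p * w p
  have hback : ∑ p, v p * w (e p) = ∑ p, v (e.symm p) * w p := by
    rw [← Equiv.sum_comp e.symm]; simp
  have lhs : ∑ p, (v (e p) + v (e.symm p) - 2 * v p) * w p
      = ∑ p, v (e p) * w p + ∑ p, v (e.symm p) * w p - 2 * ∑ p, v p * w p := by
    simp only [mul_sum, ← sum_add_distrib, ← sum_sub_distrib]; exact sum_congr rfl fun _ _ => by ring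
  have rhs : ∑ p, (v (e p) - v p) * (w (e p) - w p)
      = ∑ p, v (e p) * w (e p) - ∑ p, v (e p) * w p - ∑ p, v p * w (e p) + ∑ p, v p * w p := by
    simp only [← sum_add_distrib, ← sum_sub_distrib]; exact sum_congr rfl fun _ _ => by ring
  rw [lhs, rhs, hdiag, hback]; ring

section Grid

variable {M : ℕ} [NeZero M]

noncomputable def gradIP (M : ℕ) [NeZero M] (h : ℝ) (v w : ZMod M × ZMod M → ℝ) : ℝ :=
  h ^ 2 * ∑ p : ZMod M × ZMod M,
    ((v (p.1 + 1, p.2) - v p) / h * ((w (p.1 + 1, p.2) - w p) / h)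
      + (v (p.1, p.2 + 1) - v p) / h * ((w (p.1, p.2 + 1) - w p) / h))

lemma gradNormSq_nonneg (h : ℝ) (v : ZMod M × ZMod M → ℝ) : 0 ≤ gradNormSq M h v := by
  unfold gradNormSq; positivity

lemma two_mul_gradIP_sub (h : ℝ) (v w : ZMod M × ZMod M → ℝ) :
    2 * gradIP M h v (fun p => v p - w p)
      = gradNormSq M h v - gradNormSq M h w + gradNormSq M h (fun p => v p - w p) := by
  simp only [gradNormSq, gradIP, mul_sum, ← sum_add_distrib, ← sum_sub_distrib]
  exact sum_congr rfl fun _ _ => by ring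

lemma ipH_lapH (h : ℝ) (v w : ZMod M × ZMod M → ℝ) :
    ipH M h (lapH M h v) w = -gradIP M h v w := by
  have hx' : ∑ p : ZMod M × ZMod M, (v (p.1 + 1, p.2) + v (p.1 - 1, p.2) - 2 * v p) * w p
      = -∑ p : ZMod M × ZMod M, (v (p.1 + 1, p.2) - v p) * (w (p.1 + 1, p.2) - w p) := by
    simpa [Prod.map_apply', sub_eq_add_neg] using
      Equiv.Perm.sum_second_difference_mul ((Equiv.addRight 1).prodCongr (Equiv.refl _)) v w
  have hy' : ∑ p : ZMod M × ZMod M, (v (p.1, p.2 + 1) + v (p.1, p.2 - 1) - 2 * v p) * w p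
      = -∑ p : ZMod M × ZMod M, (v (p.1, p.2 + 1) - v p) * (w (p.1, p.2 + 1) - w p) := by
    simpa [Prod.map_apply', sub_eq_add_neg] using
      Equiv.Perm.sum_second_difference_mul ((Equiv.refl _).prodCongr (Equiv.addRight 1)) v w
  have hlap : ∑ p : ZMod M × ZMod M, lapH M h v p * w p
      = (∑ p : ZMod M × ZMod M, (v (p.1 + 1, p.2) + v (p.1 - 1, p.2) - 2 * v p) * w p
        + ∑ p : ZMod M × ZMod M, (v (p.1, p.2 + 1) + v (p.1, p.2 - 1) - 2 * v p) * w p) / h ^ 2 := by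
    rw [← sum_add_distrib, sum_div]
    exact sum_congr rfl fun _ _ => by simp only [lapH]; ring
  have hgrad : gradIP M h v w
      = h ^ 2 * ((∑ p : ZMod M × ZMod M, (v (p.1 + 1, p.2) - v p) * (w (p.1 + 1, p.2) - w p)
        + ∑ p : ZMod M × ZMod M, (v (p.1, p.2 + 1) - v p) * (w (p.1, p.2 + 1) - w p)) / h ^ 2) := by
    rw [← sum_add_distrib, sum_div]
    exact congrArg _ (sum_congr rfl fun _ _ => by ring)
  rw [ipH, hlap, hgrad, hx', hy']
  ring

lemma ipH_self (h : ℝ) (v : ZMod M × ZMod M → ℝ) : ipH M h v v = normSq M h v := by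
  simp only [ipH, normSq, sq]

lemma normSq_nonneg (h : ℝ) (v : ZMod M × ZMod M → ℝ) : 0 ≤ normSq M h v := by
  unfold normSq; positivity

lemma two_mul_mul_ipH_le (h s : ℝ) (v w : ZMod M × ZMod M → ℝ) :
    2 * s * ipH M h v w ≤ normSq M h w + s ^ 2 * normSq M h v := by
  have hsq : 0 ≤ normSq M h (fun p => w p - s * v p) := normSq_nonneg h _
  have hexp : normSq M h (fun p => w p - s * v p)
      = normSq M h w + s ^ 2 * normSq M h v - 2 * s * ipH M h v w := by
    simp only [normSq, ipH, mul_sum, ← sum_add_distrib, ← sum_sub_distrib]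
    exact sum_congr rfl fun _ _ => by ring
  linarith

end Grid

lemma D2_eq (τ w : ℕ → ℝ) {n : ℕ} (hn : 1 ≤ n) :
    D2 τ w n = (1 + 2 * ratio τ n) / (τ n * (1 + ratio τ n)) * (w n - w (n - 1))
      - ratio τ n ^ 2 / (τ n * (1 + ratio τ n)) * (w (n - 1) - w (n - 2)) := by
  obtain rfl | hn2 := hn.eq_or_lt
  · simp [D2, bker, ratio]
  obtain ⟨m, rfl⟩ : ∃ m, n = m + 2 := ⟨n - 2, by omega⟩
  have hvanish : ∑ k ∈ Icc 1 m, bker τ (m + 2) (m + 2 - k) * (w k - w (k - 1)) = 0 :=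
    sum_eq_zero fun k hk => by
      have := (mem_Icc.1 hk).2
      simp [bker, show m + 2 - k ≠ 0 by omega, show m + 2 - k ≠ 1 by omega]
  rw [D2, sum_Icc_succ_top (by omega), sum_Icc_succ_top (by omega), hvanish]
  simp only [bker, Nat.reduceEqDiff, ↓reduceIte, show m + 2 - (m + 1) = 1 by omega, one_ne_zero,
    add_tsub_cancel_right, zero_add, tsub_self, Nat.add_one_sub_one]
  ring

lemma ratio_div_sub_one (τ : ℕ → ℝ) {n : ℕ} (hτ : τ n ≠ 0) :
    ratio τ n / τ (n - 1) = ratio τ n ^ 2 / τ n := by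
  unfold ratio
  split_ifs
  · field_simp
  · simp

lemma ratio_mem_Icc_of_bounds {τ : ℕ → ℝ} {N : ℕ} {c : ℝ}
    (hr : ∀ k, 2 ≤ k → k ≤ N + 1 → 0 < ratio τ k ∧ ratio τ k < c) (hc : 0 ≤ c) {n : ℕ}
    (hn : 1 ≤ n) (hnN : n ≤ N + 1) : 0 ≤ ratio τ n ∧ ratio τ n ≤ c := by
  rcases (show n = 1 ∨ 2 ≤ n by omega) with rfl | hn2
  · simpa [ratio] using hc
  · exact ⟨(hr n hn2 hnN).1.le, (hr n hn2 hnN).2.le⟩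

lemma modEnergy_eq (M : ℕ) [NeZero M] (h ε rmax : ℝ) (τ : ℕ → ℝ)
    (φ : ℕ → ZMod M × ZMod M → ℝ) (R : ℕ → ℝ) (n : ℕ) :
    modEnergy M h ε rmax τ φ R n = ε ^ 2 / 2 * gradNormSq M h (φ n) + R n
      + ratio τ (n + 1) * Real.sqrt rmax / (2 * (1 + ratio τ (n + 1)))
        * normSq M h (fun p => φ n p - φ (n - 1) p) / τ n := by
  rcases n with _ | n
  · simp [modEnergy, ratio]
  · simp [modEnergy]

-- 4.864 lies just below the square of the real root s ≈ 2.2056 of s³ = 1 + 2s².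
lemma pow_three_le_one_add_two_mul_sq {s : ℝ} (hs : 0 < s) (hs2 : s ^ 2 ≤ 4.864) :
    s ^ 3 ≤ 1 + 2 * s ^ 2 := by
  have hsle : s ≤ 2.2055 := by nlinarith
  rcases le_or_gt s 2 with h2 | h2
  · nlinarith [mul_nonneg (by linarith : (0:ℝ) ≤ 2 - s) (sq_nonneg s)]
  · nlinarith [mul_nonneg (by linarith : (0:ℝ) ≤ 4.864 - s ^ 2) (by linarith : (0:ℝ) ≤ s - 2)]

lemma bdf2_coeff_le {s r r' : ℝ} (hs : 0 < s) (hs3 : s ^ 3 ≤ 1 + 2 * s ^ 2)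
    (hr : 0 ≤ r) (hrs : r ≤ s ^ 2) (hr' : 0 ≤ r') (hr's : r' ≤ s ^ 2) :
    r' * s / (2 * (1 + r')) ≤ (1 + 2 * r) / (1 + r) - r ^ 2 / (2 * s * (1 + r)) := by
  have hQ0 : 0 ≤ 2 * s + 2 * s * r' - s ^ 2 * r' := by
    rcases le_or_gt s 2 with h2 | h2
    · nlinarith
    · nlinarith [mul_nonneg (mul_nonneg hs.le (by linarith : (0:ℝ) ≤ s - 2))
        (by linarith : (0:ℝ) ≤ s ^ 2 - r')]
  have hQ : 0 ≤ 2 * s * (1 + 2 * r) * (1 + r') - r ^ 2 * (1 + r') - r' * s ^ 2 * (1 + r) := by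
    nlinarith [mul_nonneg (mul_nonneg (by linarith : (0:ℝ) ≤ s ^ 2 - r) (sq_nonneg s)) hQ0,
      mul_nonneg (mul_nonneg hr (by linarith : (0:ℝ) ≤ s ^ 2 - r'))
        (by nlinarith [sq_nonneg s] : (0:ℝ) ≤ s * (2 + 4 * s ^ 2 - s ^ 3)),
      mul_nonneg (mul_nonneg hr hr')
        (mul_nonneg (mul_nonneg (by linarith : (0:ℝ) ≤ 2 * s) (by positivity : (0:ℝ) ≤ 1 + s ^ 2))
          (by linarith : (0:ℝ) ≤ 1 + 2 * s ^ 2 - s ^ 3)),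
      mul_nonneg (mul_nonneg (mul_nonneg (pow_nonneg hs.le 4) (by linarith : (0:ℝ) ≤ 1 + r')) hr)
        (by linarith : (0:ℝ) ≤ s ^ 2 - r),
      pow_pos hs 4]
  have hsplit : (1 + 2 * r) / (1 + r) - r ^ 2 / (2 * s * (1 + r)) - r' * s / (2 * (1 + r'))
      = (2 * s * (1 + 2 * r) * (1 + r') - r ^ 2 * (1 + r') - r' * s ^ 2 * (1 + r))
        / (2 * s * (1 + r) * (1 + r')) := by
    field_simp
  rw [← sub_nonneg, hsplit]
  exact div_nonneg hQ (by positivity)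

lemma bdf2_form_lower_bound {s r r' τ X Y Z : ℝ} (hs : 0 < s) (hs3 : s ^ 3 ≤ 1 + 2 * s ^ 2)
    (hr : 0 ≤ r) (hrs : r ≤ s ^ 2) (hr' : 0 ≤ r') (hr's : r' ≤ s ^ 2) (hτ : 0 < τ)
    (hX : 0 ≤ X) (hZ : 2 * s * Z ≤ X + s ^ 2 * Y) :
    r' * s / (2 * (1 + r')) * X / τ - r ^ 2 * s / (2 * (1 + r)) * Y / τ
      ≤ (1 + 2 * r) / (τ * (1 + r)) * X - r ^ 2 / (τ * (1 + r)) * Z := by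
  have hcoeff := mul_le_mul_of_nonneg_right (bdf2_coeff_le hs hs3 hr hrs hr' hr's) hX
  have hZ' : r ^ 2 / (2 * s * (1 + r)) * (2 * s * Z)
      ≤ r ^ 2 / (2 * s * (1 + r)) * (X + s ^ 2 * Y) :=
    mul_le_mul_of_nonneg_left hZ (by positivity)
  have hrhs : (1 + 2 * r) / (τ * (1 + r)) * X - r ^ 2 / (τ * (1 + r)) * Z
      = ((1 + 2 * r) / (1 + r) * X - r ^ 2 / (2 * s * (1 + r)) * (2 * s * Z)) / τ := by
    field_simp
  have hlhs : r' * s / (2 * (1 + r')) * X / τ - r ^ 2 * s / (2 * (1 + r)) * Y / τ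
      = (r' * s / (2 * (1 + r')) * X - r ^ 2 / (2 * s * (1 + r)) * (s ^ 2 * Y)) / τ := by
    field_simp
  rw [hrhs, hlhs]
  gcongr ?_ / _
  have hsY : r ^ 2 / (2 * s * (1 + r)) * (X + s ^ 2 * Y)
      = r ^ 2 / (2 * s * (1 + r)) * X + r ^ 2 / (2 * s * (1 + r)) * (s ^ 2 * Y) := by ring
  linarith

lemma ipH_D2_increment {M : ℕ} [NeZero M] (h : ℝ) (τ : ℕ → ℝ)
    (φ : ℕ → ZMod M × ZMod M → ℝ) {n : ℕ} (hn : 1 ≤ n) :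
    ipH M h (fun p => D2 τ (fun k => φ k p) n) (fun p => φ n p - φ (n - 1) p)
      = (1 + 2 * ratio τ n) / (τ n * (1 + ratio τ n))
          * normSq M h (fun p => φ n p - φ (n - 1) p)
        - ratio τ n ^ 2 / (τ n * (1 + ratio τ n))
          * ipH M h (fun p => φ (n - 1) p - φ (n - 2) p) (fun p => φ n p - φ (n - 1) p) := by
  simp only [← ipH_self, ipH, D2_eq _ _ hn, mul_sum, ← sum_sub_distrib]
  exact sum_congr rfl fun _ _ => by ring

lemma BDF2sESAVI.R_sub_eq {M : ℕ} [NeZero M] {h ε κ : ℝ} {f F V : ℝ → ℝ} {N : ℕ}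
    {τ : ℕ → ℝ} {φ φhat : ℕ → ZMod M × ZMod M → ℝ} {R : ℕ → ℝ}
    (hsch : BDF2sESAVI M h ε κ f F V N τ φ φhat R) {n : ℕ} (hn : 1 ≤ n) (hnN : n ≤ N)
    (hτ : τ n ≠ 0) :
    R n - R (n - 1)
      = -ipH M h (fun p => D2 τ (fun k => φ k p) n) (fun p => φ n p - φ (n - 1) p)
        - ε ^ 2 * gradIP M h (φ n) (fun p => φ n p - φ (n - 1) p) := by
  have hnonlin : (fun p => V (gh M h F (φhat n) (R (n - 1))) * f (φhat n p)
        - κ * (φ n p - V (gh M h F (φhat n) (R (n - 1))) * φhat n p))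
      = fun p => D2 τ (fun k => φ k p) n - ε ^ 2 * lapH M h (φ n) p :=
    funext fun p => by linarith [hsch.step n hn hnN p]
  have haux := hsch.aux n hn hnN
  have hsplit : ipH M h (fun p => D2 τ (fun k => φ k p) n - ε ^ 2 * lapH M h (φ n) p)
        (fun p => (φ n p - φ (n - 1) p) / τ n)
      = (ipH M h (fun p => D2 τ (fun k => φ k p) n) (fun p => φ n p - φ (n - 1) p)
        - ε ^ 2 * ipH M h (lapH M h (φ n)) (fun p => φ n p - φ (n - 1) p)) / τ n := by
    simp only [ipH, mul_sum, ← sum_sub_distrib, sum_div]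
    exact sum_congr rfl fun _ _ => by ring
  rw [hnonlin, hsplit, ipH_lapH, ← neg_div, div_left_inj' hτ] at haux
  linarith

theorem stmt1_general (M : ℕ) [NeZero M] (h ε κ : ℝ)
    (δ : ℝ) (hδ : 0 < δ)
    (f F V : ℝ → ℝ)
    (N : ℕ) (τ : ℕ → ℝ) (hτ : ∀ k, 1 ≤ k → k ≤ N + 1 → 0 < τ k)
    (hr : ∀ k, 2 ≤ k → k ≤ N + 1 → 0 < ratio τ k ∧ ratio τ k < 4.864 - δ)
    (φ φhat : ℕ → ZMod M × ZMod M → ℝ) (R : ℕ → ℝ)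
    (hsch : BDF2sESAVI M h ε κ f F V N τ φ φhat R) :
    ∀ n, 1 ≤ n → n ≤ N →
      modEnergy M h ε (4.864 - δ) τ φ R n ≤
        modEnergy M h ε (4.864 - δ) τ φ R (n - 1) := by
  intro n hn hnN
  rw [modEnergy_eq, modEnergy_eq, Nat.sub_add_cancel hn, show n - 1 - 1 = n - 2 by omega]
  set s := Real.sqrt (4.864 - δ)
  set u : ZMod M × ZMod M → ℝ := fun p => φ n p - φ (n - 1) p
  set u' : ZMod M × ZMod M → ℝ := fun p => φ (n - 1) p - φ (n - 2) p
  obtain ⟨hr'pos, hr'max⟩ := hr (n + 1) (by omega) (by omega)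
  have hrmax : 0 < 4.864 - δ := hr'pos.trans hr'max
  have hs : 0 < s := Real.sqrt_pos.2 hrmax
  have hs2 : s ^ 2 = 4.864 - δ := Real.sq_sqrt hrmax.le
  have hτn : 0 < τ n := hτ n hn (by omega)
  have hrn := ratio_mem_Icc_of_bounds hr hrmax.le hn (by omega)
  rw [← hs2] at hrn
  have hform := bdf2_form_lower_bound hs (pow_three_le_one_add_two_mul_sq hs (by linarith))
    hrn.1 hrn.2 hr'pos.le (by linarith) hτn (normSq_nonneg h u) (two_mul_mul_ipH_le h s u' u)
  have hprev : ratio τ n * s / (2 * (1 + ratio τ n)) * normSq M h u' / τ (n - 1)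
      = ratio τ n ^ 2 * s / (2 * (1 + ratio τ n)) * normSq M h u' / τ n := by
    calc _ = ratio τ n / τ (n - 1) * (s * normSq M h u' / (2 * (1 + ratio τ n))) := by ring
      _ = ratio τ n ^ 2 / τ n * (s * normSq M h u' / (2 * (1 + ratio τ n))) := by
        rw [ratio_div_sub_one τ hτn.ne']
      _ = _ := by ring
  have hgrad : ε ^ 2 * gradIP M h (φ n) u
      = ε ^ 2 / 2 * (gradNormSq M h (φ n) - gradNormSq M h (φ (n - 1)) + gradNormSq M h u) := by
    rw [← two_mul_gradIP_sub]; ring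
  have hgrad_nonneg : 0 ≤ ε ^ 2 / 2 * gradNormSq M h u := by
    have := gradNormSq_nonneg h u; positivity
  rw [hprev]
  linarith [hsch.R_sub_eq hn hnN hτn.ne', ipH_D2_increment h τ φ hn]

/-- Theorem 3.2 (discrete energy dissipation law of the BDF2-sESAV-I scheme):
with r_max = 4.864 − δ and step ratios 0 < r_k < r_max for 2 ≤ k ≤ N+1, for
any κ ≥ 0 and any f, F, V the scheme satisfies
𝓔_h[φ^n, R^n] ≤ 𝓔_h[φ^{n−1}, R^{n−1}] for 1 ≤ n ≤ N. -/
theorem stmt1 (M : ℕ) [NeZero M] (hM : 1 ≤ M) (h ε κ : ℝ)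
    (hh : 0 < h) (hε : 0 < ε) (hκ : 0 ≤ κ)
    (δ : ℝ) (hδ : 0 < δ) (hδ' : δ < 4.864)
    (f F V : ℝ → ℝ)
    (N : ℕ) (τ : ℕ → ℝ) (hτ : ∀ k, 1 ≤ k → k ≤ N + 1 → 0 < τ k)
    (hr : ∀ k, 2 ≤ k → k ≤ N + 1 → 0 < ratio τ k ∧ ratio τ k < 4.864 - δ)
    (φ φhat : ℕ → ZMod M × ZMod M → ℝ) (R : ℕ → ℝ)
    (hsch : BDF2sESAVI M h ε κ f F V N τ φ φhat R) :
    ∀ n, 1 ≤ n → n ≤ N →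
      modEnergy M h ε (4.864 - δ) τ φ R n ≤
        modEnergy M h ε (4.864 - δ) τ φ R (n - 1) :=
  stmt1_general M h ε κ δ hδ f F V N τ hτ hr φ φhat R hsch
end

section
/- Assume f : ℝ → ℝ is continuously differentiable and there is β > 0 with f(β) ≤ 0 ≤ f(−β); let κ ≥ max_{|x|≤β}|f′(x)|, ε > 0, τ > 0 and h > 0. Let φ and φ̂ be periodic grid functions with ‖φ‖_∞ ≤ β satisfying the stabilized BDF1 step (φ̂ − φ)/τ = ε²Δ_hφ̂ + f(φ) − κ(φ̂ − φ), where f acts pointwise. Then ‖φ̂‖_∞ ≤ β, with no restriction on τ. -/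
/-!
The step is `(1 + κτ) φ̂ - τε² Δ_h φ̂ = g(φ)` with `g(x) = x + τ (f x + κ x)`. The bound on `f'`
makes `x ↦ f x + κ x`, hence `g`, monotone on `[-β, β]`, so the sign conditions on `f(±β)` give
`|g(φ)| ≤ (1 + κτ) β`. On the other hand `Δ_h φ̂ ≤ 0` where `φ̂` is maximal and `Δ_h φ̂ ≥ 0` where it
is minimal, so `(1 + κτ) - τε² Δ_h` cannot increase the maximum norm.
-/

open Set

lemma monotoneOn_add_mul_self_of_neg_le_deriv {f : ℝ → ℝ} {κ : ℝ} {s : Set ℝ} (hs : Convex ℝ s)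
    (hf : Differentiable ℝ f) (hκ : ∀ x ∈ s, -κ ≤ deriv f x) :
    MonotoneOn (fun x => f x + κ * x) s := by
  have hderiv : ∀ x, HasDerivAt (fun x => f x + κ * x) (deriv f x + κ) x := fun x =>
    (hf x).hasDerivAt.add (hasDerivAt_const_mul κ)
  refine monotoneOn_of_deriv_nonneg hs (hf.continuous.add (continuous_const_mul κ)).continuousOn
    (fun x _ => (hderiv x).differentiableAt.differentiableWithinAt) fun x hx => ?_
  rw [(hderiv x).deriv]
  linarith [hκ x (interior_subset hx)]

lemma abs_add_mul_add_mul_self_le {f : ℝ → ℝ} {τ κ β x : ℝ} (hf : Differentiable ℝ f)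
    (hτ : 0 ≤ τ) (hfβ : f β ≤ 0) (hfβ' : 0 ≤ f (-β))
    (hκ : ∀ x : ℝ, |x| ≤ β → |deriv f x| ≤ κ) (hx : |x| ≤ β) :
    |x + τ * (f x + κ * x)| ≤ (1 + κ * τ) * β := by
  have hmono : MonotoneOn (fun x => f x + κ * x) (Icc (-β) β) :=
    monotoneOn_add_mul_self_of_neg_le_deriv (convex_Icc _ _) hf fun y hy =>
      (abs_le.mp (hκ y (abs_le.mpr hy))).1
  have hxI : x ∈ Icc (-β) β := abs_le.mp hx
  have hβ : 0 ≤ β := (abs_nonneg x).trans hx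
  have hupper := hmono hxI (right_mem_Icc.mpr (by linarith)) hxI.2
  have hlower := hmono (left_mem_Icc.mpr (by linarith)) hxI hxI.1
  simp only at hupper hlower
  rw [abs_le]
  constructor <;> nlinarith [hxI.1, hxI.2]

section GridFunctions

variable {M : ℕ} {h : ℝ} {v : ZMod M × ZMod M → ℝ} {p : ZMod M × ZMod M}

lemma lapH_nonpos_of_forall_le (hp : ∀ q, v q ≤ v p) : lapH M h v p ≤ 0 :=
  div_nonpos_of_nonpos_of_nonneg
    (by linarith [hp (p.1 + 1, p.2), hp (p.1 - 1, p.2), hp (p.1, p.2 + 1), hp (p.1, p.2 - 1)])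
    (sq_nonneg h)

lemma lapH_nonneg_of_forall_ge (hp : ∀ q, v p ≤ v q) : 0 ≤ lapH M h v p :=
  div_nonneg
    (by linarith [hp (p.1 + 1, p.2), hp (p.1 - 1, p.2), hp (p.1, p.2 + 1), hp (p.1, p.2 - 1)])
    (sq_nonneg h)

variable [NeZero M]

lemma maxNorm_le_iff {β : ℝ} : maxNorm M v ≤ β ↔ ∀ p, |v p| ≤ β := by
  change Finset.univ.sup' Finset.univ_nonempty (fun p => |v p|) ≤ β ↔ _
  simp only [Finset.sup'_le_iff, Finset.mem_univ, forall_const]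

lemma maxNorm_le_of_abs_mul_sub_mul_lapH_le {a c β : ℝ} (ha : 0 < a) (hc : 0 ≤ c)
    (hv : ∀ p, |a * v p - c * lapH M h v p| ≤ a * β) : maxNorm M v ≤ β := by
  obtain ⟨pmax, hpmax⟩ := Finite.exists_max v
  obtain ⟨pmin, hpmin⟩ := Finite.exists_min v
  have hmax : a * v pmax ≤ a * β := by
    have := mul_nonpos_of_nonneg_of_nonpos hc (lapH_nonpos_of_forall_le (h := h) hpmax)
    linarith [(abs_le.mp (hv pmax)).2]
  have hmin : a * -β ≤ a * v pmin := by
    have := mul_nonneg hc (lapH_nonneg_of_forall_ge (h := h) hpmin)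
    linarith [(abs_le.mp (hv pmin)).1]
  refine maxNorm_le_iff.mpr fun p => abs_le.mpr ⟨?_, ?_⟩
  · exact (le_of_mul_le_mul_left hmin ha).trans (hpmin p)
  · exact (hpmax p).trans (le_of_mul_le_mul_left hmax ha)

end GridFunctions

theorem stmt6_general (M : ℕ) [NeZero M] (h ε τ κ β : ℝ)
    (hτ : 0 < τ)
    (f : ℝ → ℝ) (hf : ContDiff ℝ 1 f) (hβ : 0 < β)
    (hfβ : f β ≤ 0) (hfβ' : 0 ≤ f (-β))
    (hκ : ∀ x : ℝ, |x| ≤ β → |deriv f x| ≤ κ)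
    (φ φhat : ZMod M × ZMod M → ℝ)
    (hφ : maxNorm M φ ≤ β)
    (heq : ∀ p, (φhat p - φ p) / τ =
      ε ^ 2 * lapH M h φhat p + f (φ p) - κ * (φhat p - φ p)) :
    maxNorm M φhat ≤ β := by
  have hκ0 : 0 ≤ κ := (abs_nonneg _).trans (hκ 0 (by simpa using hβ.le))
  have hstep : ∀ p, (1 + κ * τ) * φhat p - τ * ε ^ 2 * lapH M h φhat p =
      φ p + τ * (f (φ p) + κ * φ p) := fun p => by
    have := heq p
    field_simp at this
    linarith
  refine maxNorm_le_of_abs_mul_sub_mul_lapH_le (h := h) (a := 1 + κ * τ) (c := τ * ε ^ 2)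
    (by positivity) (by positivity) fun p => ?_
  rw [hstep]
  exact abs_add_mul_add_mul_self_le (hf.differentiable one_ne_zero) hτ.le hfβ hfβ' hκ
    (maxNorm_le_iff.mp hφ p)

/-- Unconditional discrete MBP for the stabilized BDF1 step: if ‖φ‖_∞ ≤ β and
(φ̂ − φ)/τ = ε²Δ_hφ̂ + f(φ) − κ(φ̂ − φ) with κ ≥ max_{|x|≤β}|f′(x)|, then
‖φ̂‖_∞ ≤ β, with no restriction on τ. -/
theorem stmt6 (M : ℕ) [NeZero M] (hM : 1 ≤ M) (h ε τ κ β : ℝ)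
    (hh : 0 < h) (hε : 0 < ε) (hτ : 0 < τ)
    (f : ℝ → ℝ) (hf : ContDiff ℝ 1 f) (hβ : 0 < β)
    (hfβ : f β ≤ 0) (hfβ' : 0 ≤ f (-β))
    (hκ : ∀ x : ℝ, |x| ≤ β → |deriv f x| ≤ κ)
    (φ φhat : ZMod M × ZMod M → ℝ)
    (hφ : maxNorm M φ ≤ β)
    (heq : ∀ p, (φhat p - φ p) / τ =
      ε ^ 2 * lapH M h φhat p + f (φ p) - κ * (φhat p - φ p)) :
    maxNorm M φhat ≤ β :=
  stmt6_general M h ε τ κ β hτ f hf hβ hfβ hfβ' hκ φ φhat hφ heq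
end

section
/- Let κ ≥ 0, ε > 0, h > 0, and let the step ratios satisfy 0 < r_k < 1 + √2 for 2 ≤ k ≤ n, with r_1 = 0. Let η ∈ (0,1) satisfy r_k²/(1+2r_k) < η for 2 ≤ k ≤ n, and suppose the step sizes satisfy τ_m ≤ ((1+2r_m)η − r_m²)/(η²(1+r_m)) · (1−η)/(κ + 4ε²h⁻²) for all 1 ≤ m ≤ n. Then for every constant λ ∈ [0,1] and every 1 ≤ k ≤ n, the linear operator v ↦ (d_{k−1}^{(n)} − d_k^{(n)} − κλη^k)·v + η^k ε² Δ_h v on periodic grid functions satisfies ‖(d_{k−1}^{(n)} − d_k^{(n)} − κλη^k)v + η^k ε² Δ_h v‖_∞ ≤ (d_{k−1}^{(n)} − d_k^{(n)} − κλη^k)·‖v‖_∞ for every periodic grid function v. -/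
section MaxNorm

variable {M : ℕ} [NeZero M]

theorem abs_le_maxNorm (v : ZMod M × ZMod M → ℝ) (p : ZMod M × ZMod M) :
    |v p| ≤ maxNorm M v :=
  Finset.le_sup' (fun p => |v p|) (Finset.mem_univ p)

theorem maxNorm_le {v : ZMod M × ZMod M → ℝ} {C : ℝ} (hv : ∀ p, |v p| ≤ C) :
    maxNorm M v ≤ C :=
  Finset.sup'_le _ _ fun p _ => hv p

theorem abs_five_point_le {α β x₀ x₁ x₂ x₃ x₄ N : ℝ} (hα : 0 ≤ α) (hβ : 0 ≤ β)
    (h₀ : |x₀| ≤ N) (h₁ : |x₁| ≤ N) (h₂ : |x₂| ≤ N) (h₃ : |x₃| ≤ N) (h₄ : |x₄| ≤ N) :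
    |α * x₀ + β * (x₁ + x₂ + x₃ + x₄)| ≤ (α + 4 * β) * N := by
  calc |α * x₀ + β * (x₁ + x₂ + x₃ + x₄)|
      ≤ α * |x₀| + β * (|x₁| + |x₂| + |x₃| + |x₄|) := by
        refine (abs_add_le _ _).trans ?_
        rw [abs_mul, abs_mul, abs_of_nonneg hα, abs_of_nonneg hβ]
        gcongr
        exact (abs_add_le _ _).trans (by gcongr; exact abs_add_three _ _ _)
    _ ≤ α * N + β * (N + N + N + N) := by gcongr
    _ = (α + 4 * β) * N := by ring

theorem maxNorm_mul_add_mul_lapH_le (h : ℝ) (v : ZMod M × ZMod M → ℝ) {a c : ℝ}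
    (ha : 0 ≤ a) (hac : 4 * a / h ^ 2 ≤ c) :
    maxNorm M (fun p => c * v p + a * lapH M h v p) ≤ c * maxNorm M v := by
  refine maxNorm_le fun p => ?_
  have hstencil : c * v p + a * lapH M h v p = (c - 4 * a / h ^ 2) * v p
      + a / h ^ 2 * (v (p.1 + 1, p.2) + v (p.1 - 1, p.2) + v (p.1, p.2 + 1) + v (p.1, p.2 - 1)) := by
    simp only [lapH]
    ring
  rw [hstencil]
  convert abs_five_point_le (sub_nonneg.2 hac) (div_nonneg ha (sq_nonneg h))
    (abs_le_maxNorm v _) (abs_le_maxNorm v _) (abs_le_maxNorm v _) (abs_le_maxNorm v _)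
    (abs_le_maxNorm v _) using 2
  ring

end MaxNorm

section Kernels

variable {τ : ℕ → ℝ} {n : ℕ}

theorem ratio_nonneg (hτ : ∀ m, 1 ≤ m → m ≤ n → 0 < τ m) : 0 ≤ ratio τ n := by
  unfold ratio
  split_ifs with hn
  · exact div_nonneg (hτ n (by omega) le_rfl).le (hτ (n - 1) (by omega) (by omega)).le
  · exact le_rfl

-- For `n = 1` these hold as well, because `r₁ = 0`.
theorem bker_zero_eq (τ : ℕ → ℝ) (n : ℕ) :
    bker τ n 0 = (1 + 2 * ratio τ n) / (τ n * (1 + ratio τ n)) := by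
  rcases eq_or_ne n 1 with rfl | hn <;> simp [bker, ratio, *]

theorem bker_one_eq (τ : ℕ → ℝ) (n : ℕ) :
    bker τ n 1 = -ratio τ n ^ 2 / (τ n * (1 + ratio τ n)) := by
  rcases eq_or_ne n 1 with rfl | hn <;> simp [bker, ratio, *]

theorem bker_one_nonpos (hτ : 0 < τ n) (hr : 0 ≤ ratio τ n) : bker τ n 1 ≤ 0 := by
  rw [bker_one_eq]
  exact div_nonpos_of_nonpos_of_nonneg (neg_nonpos.2 (sq_nonneg _)) (by positivity)

theorem sq_mul_le_of_step_le {η K : ℝ} (hτ : 0 < τ n) (hr : 0 ≤ ratio τ n) (hη : 0 < η)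
    (hK : 0 < K)
    (hstep : τ n ≤ ((1 + 2 * ratio τ n) * η - ratio τ n ^ 2) / (η ^ 2 * (1 + ratio τ n))
      * (1 - η) / K) :
    η ^ 2 * K ≤ (1 - η) * (bker τ n 0 * η + bker τ n 1) := by
  rw [bker_zero_eq, bker_one_eq]
  set r := ratio τ n
  have hcross : τ n * K * (η ^ 2 * (1 + r)) ≤ ((1 + 2 * r) * η - r ^ 2) * (1 - η) := by
    rwa [le_div_iff₀ hK, div_mul_eq_mul_div, le_div_iff₀ (by positivity)] at hstep
  have hsum : (1 + 2 * r) / (τ n * (1 + r)) * η + -r ^ 2 / (τ n * (1 + r)) =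
      ((1 + 2 * r) * η - r ^ 2) / (τ n * (1 + r)) := by
    ring
  rw [hsum, mul_div_assoc', le_div_iff₀ (by positivity)]
  linarith

theorem pow_succ_mul_le_dker_sub_dker_succ {η K : ℝ} (hη : 0 < η) (hb₁ : bker τ n 1 ≤ 0)
    (hB : η ^ 2 * K ≤ (1 - η) * (bker τ n 0 * η + bker τ n 1)) (j : ℕ) :
    η ^ (j + 1) * K ≤ dker τ η n j - dker τ η n (j + 1) := by
  cases j with
  | zero =>
    simp only [dker, zero_add, pow_one, if_true, one_ne_zero, if_false, Nat.sub_self, pow_zero,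
      one_mul]
    refine le_of_mul_le_mul_left ?_ hη
    nlinarith
  | succ j =>
    have hgap : dker τ η n (j + 1) - dker τ η n (j + 1 + 1) =
        η ^ j * ((1 - η) * (bker τ n 0 * η + bker τ n 1)) := by
      simp only [dker, Nat.add_one_ne_zero, if_false, Nat.add_sub_cancel]
      ring
    rw [hgap, show η ^ (j + 1 + 1) * K = η ^ j * (η ^ 2 * K) by ring]
    exact mul_le_mul_of_nonneg_left hB (by positivity)

end Kernels

theorem stmt7_general (M : ℕ) [NeZero M] (h ε κ : ℝ)
    (hh : 0 < h) (hε : 0 < ε) (hκ : 0 ≤ κ)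
    (n : ℕ) (τ : ℕ → ℝ) (hτ : ∀ m, 1 ≤ m → m ≤ n → 0 < τ m)
    (η : ℝ) (hη0 : 0 < η)
    (hstep : ∀ m, 1 ≤ m → m ≤ n →
      τ m ≤ ((1 + 2 * ratio τ m) * η - (ratio τ m) ^ 2) / (η ^ 2 * (1 + ratio τ m))
        * (1 - η) / (κ + 4 * ε ^ 2 / h ^ 2)) :
    ∀ lam : ℝ, 0 ≤ lam → lam ≤ 1 → ∀ k, 1 ≤ k → k ≤ n →
      ∀ v : ZMod M × ZMod M → ℝ,
        maxNorm M (fun p =>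
            (dker τ η n (k - 1) - dker τ η n k - κ * lam * η ^ k) * v p
              + η ^ k * ε ^ 2 * lapH M h v p) ≤
          (dker τ η n (k - 1) - dker τ η n k - κ * lam * η ^ k) * maxNorm M v := by
  intro lam _ hlam1 k hk1 hkn v
  obtain ⟨j, rfl⟩ : ∃ j, k = j + 1 := ⟨k - 1, by omega⟩
  have hτn : 0 < τ n := hτ n (by omega) le_rfl
  have hr : 0 ≤ ratio τ n := ratio_nonneg hτ
  have hgap := pow_succ_mul_le_dker_sub_dker_succ hη0 (bker_one_nonpos hτn hr)
    (sq_mul_le_of_step_le hτn hr hη0 (by positivity) (hstep n (by omega) le_rfl)) j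
  have hlam : κ * lam * η ^ (j + 1) ≤ κ * η ^ (j + 1) := by
    gcongr
    exact mul_le_of_le_one_right hκ hlam1
  refine maxNorm_mul_add_mul_lapH_le h v (by positivity) ?_
  rw [Nat.add_sub_cancel]
  linarith [show η ^ (j + 1) * (κ + 4 * ε ^ 2 / h ^ 2)
    = κ * η ^ (j + 1) + 4 * (η ^ (j + 1) * ε ^ 2) / h ^ 2 by ring]

/-- Lemma 3.2: under the ratio condition 0 < r_k < 1+√2, the kernel condition
r_k²/(1+2r_k) < η < 1, and the step-size restriction
τ_m ≤ ((1+2r_m)η − r_m²)/(η²(1+r_m)) · (1−η)/(κ + 4ε²h⁻²), for every λ ∈ [0,1]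
and 1 ≤ k ≤ n the operator v ↦ (d_{k−1}^{(n)} − d_k^{(n)} − κλη^k)v + η^kε²Δ_h v
has maximum-norm bound d_{k−1}^{(n)} − d_k^{(n)} − κλη^k. -/
theorem stmt7 (M : ℕ) [NeZero M] (hM : 1 ≤ M) (h ε κ : ℝ)
    (hh : 0 < h) (hε : 0 < ε) (hκ : 0 ≤ κ)
    (n : ℕ) (hn : 1 ≤ n) (τ : ℕ → ℝ) (hτ : ∀ m, 1 ≤ m → m ≤ n → 0 < τ m)
    (hr : ∀ k, 2 ≤ k → k ≤ n → 0 < ratio τ k ∧ ratio τ k < 1 + Real.sqrt 2)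
    (η : ℝ) (hη0 : 0 < η) (hη1 : η < 1)
    (hηr : ∀ k, 2 ≤ k → k ≤ n → (ratio τ k) ^ 2 / (1 + 2 * ratio τ k) < η)
    (hstep : ∀ m, 1 ≤ m → m ≤ n →
      τ m ≤ ((1 + 2 * ratio τ m) * η - (ratio τ m) ^ 2) / (η ^ 2 * (1 + ratio τ m))
        * (1 - η) / (κ + 4 * ε ^ 2 / h ^ 2)) :
    ∀ lam : ℝ, 0 ≤ lam → lam ≤ 1 → ∀ k, 1 ≤ k → k ≤ n →
      ∀ v : ZMod M × ZMod M → ℝ,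
        maxNorm M (fun p =>
            (dker τ η n (k - 1) - dker τ η n k - κ * lam * η ^ k) * v p
              + η ^ k * ε ^ 2 * lapH M h v p) ≤
          (dker τ η n (k - 1) - dker τ η n k - κ * lam * η ^ k) * maxNorm M v :=
  stmt7_general M h ε κ hh hε hκ n τ hτ η hη0 hstep
end
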